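/- Let X be a finite T₀-space and let A be a subspace of X. Then A is a dbp–retract of X if and only if for every x ∈ X the set U_x ∩ A has a maximum in the specialization order. Equivalently, A is a dbp–retract of X if and only if U_x ∩ A has a maximum for every x ∈ X − A. -/

import Mathlib

open unitInterval

set_option autoImplicit false

universe u v

/-- The specialization preorder: `x ≤ y` iff every open set containing `y` contains `x`. -/
def specLE {X : Type*} [TopologicalSpace X] (x y : X) : Prop :=
  ∀ U : Set X, IsOpen U → y ∈ U → x ∈ U

/-- A continuous map `i : A → X` is a (Hurewicz) cofibration iff it has the homotopy
extension property with respect to all topological spaces. -/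
def IsCofibration {A : Type*} {X : Type*} [TopologicalSpace A] [TopologicalSpace X]
    (i : C(A, X)) : Prop :=
  ∀ (Z : Type v) [TopologicalSpace Z] (f : C(X, Z)) (H : C(A × I, Z)),
    (∀ a, H (a, 0) = f (i a)) →
    ∃ G : C(X × I, Z),
      (∀ x, G (x, 0) = f x) ∧ ∀ a t, G (i a, t) = H (a, t)

/-- `x` is a down beat point of the subspace `S`:
the set of points of `S` strictly below `x` has a maximum. -/
def IsDownBeatPoint {X : Type*} [TopologicalSpace X] (S : Set X) (x : X) : Prop :=
  x ∈ S ∧ ∃ m ∈ S, m ≠ x ∧ specLE m x ∧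
    ∀ z ∈ S, z ≠ x → specLE z x → specLE z m

/-- `T` is a dbp–retract of `S`: `T` is obtained from `S` by successively
removing down beat points. -/
inductive IsDbpRetract {X : Type*} [TopologicalSpace X] : Set X → Set X → Prop
  | refl (S : Set X) : IsDbpRetract S S
  | step {S T : Set X} (x : X) (hx : IsDownBeatPoint S x)
      (h : IsDbpRetract (S \ {x}) T) : IsDbpRetract S T

/-- The minimal open set containing `x` (in a finite space): the intersection of all
open sets containing `x`. -/
def minOpen {X : Type*} [TopologicalSpace X] (x : X) : Set X :=
  ⋂₀ {U : Set X | IsOpen U ∧ x ∈ U}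

/-!
A dbp–retraction only ever deletes a point `x` whose strict down-set has a maximum `m`; points of
the remaining set below `x` are then below `m`, so maxima of `U_x ∩ A` survive each deletion, and
for `x ∈ A` the maximum is `x` itself. Conversely, if `U_x ∩ A` has a maximum for all `x ∉ A`,
a point `x` of `S \ A` minimal in the specialization order is a down beat point of `S`: every
point of `S` strictly below `x` lies in `A`, hence below the maximum of `U_x ∩ A`. Deleting such
points one at a time reaches `A`.
-/

open Set

section DbpRetract

variable {X : Type*} [TopologicalSpace X]

theorem specLE_iff_specializes {x y : X} : specLE x y ↔ x ⤳ y :=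
  specializes_iff_forall_open.symm

theorem specLE.trans {x y z : X} (hxy : specLE x y) (hyz : specLE y z) : specLE x z :=
  specLE_iff_specializes.2 <| (specLE_iff_specializes.1 hxy).trans (specLE_iff_specializes.1 hyz)

theorem specLE.antisymm [T0Space X] {x y : X} (hxy : specLE x y) (hyx : specLE y x) : x = y :=
  ((specLE_iff_specializes.1 hxy).antisymm (specLE_iff_specializes.1 hyx)).eq

theorem mem_minOpen {x z : X} : z ∈ minOpen x ↔ specLE z x :=
  ⟨fun h U hU hx => h U ⟨hU, hx⟩, fun h _ hU => h _ hU.1 hU.2⟩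

theorem self_mem_minOpen (x : X) : x ∈ minOpen x :=
  fun _ hU => hU.2

theorem minOpen_subset_minOpen {x y : X} (hxy : specLE x y) : minOpen x ⊆ minOpen y :=
  fun _ hz => mem_minOpen.2 <| (mem_minOpen.1 hz).trans hxy

def HasSpecMax (s : Set X) : Prop :=
  ∃ m ∈ s, ∀ z ∈ s, specLE z m

theorem hasSpecMax_minOpen_inter_of_mem {A : Set X} {x : X} (hx : x ∈ A) :
    HasSpecMax (minOpen x ∩ A) :=
  ⟨x, ⟨self_mem_minOpen x, hx⟩, fun _ hz => mem_minOpen.1 hz.1⟩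

theorem IsDbpRetract.subset {S T : Set X} (h : IsDbpRetract S T) : T ⊆ S := by
  induction h with
  | refl S => exact subset_rfl
  | step x hx h ih => exact ih.trans sdiff_subset

theorem IsDbpRetract.hasSpecMax_minOpen_inter {S T : Set X} (h : IsDbpRetract S T) {x : X}
    (hx : x ∈ S) : HasSpecMax (minOpen x ∩ T) := by
  induction h generalizing x with
  | refl S => exact hasSpecMax_minOpen_inter_of_mem hx
  | step y hy h ih =>
    by_cases hxy : x = y
    · subst hxy
      obtain ⟨m, hmS, hmx, hm_le, hm_max⟩ := hy.2
      obtain ⟨M, ⟨hMm, hMT⟩, hM_max⟩ := ih (x := m) ⟨hmS, hmx⟩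
      refine ⟨M, ⟨minOpen_subset_minOpen hm_le hMm, hMT⟩, fun z ⟨hzx, hzT⟩ => ?_⟩
      obtain ⟨hzS, hzx'⟩ := h.subset hzT
      exact hM_max z ⟨mem_minOpen.2 <| hm_max z hzS hzx' (mem_minOpen.1 hzx), hzT⟩
    · exact ih ⟨hx, hxy⟩

theorem Set.Finite.exists_specLE_minimal [T0Space X] {B : Set X} (hB : B.Finite)
    (hne : B.Nonempty) : ∃ x ∈ B, ∀ z ∈ B, specLE z x → z = x := by
  obtain ⟨x, hxB, hx_min⟩ := hB.exists_minimalFor minOpen B hne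
  refine ⟨x, hxB, fun z hzB hzx => hzx.antisymm ?_⟩
  exact mem_minOpen.1 <| hx_min hzB (minOpen_subset_minOpen hzx) (self_mem_minOpen x)

theorem isDownBeatPoint_of_minimal {S A : Set X} (hAS : A ⊆ S) {x : X} (hx : x ∈ S \ A)
    (hx_min : ∀ z ∈ S \ A, specLE z x → z = x) (hA : HasSpecMax (minOpen x ∩ A)) :
    IsDownBeatPoint S x := by
  obtain ⟨m, ⟨hmx, hmA⟩, hm_max⟩ := hA
  refine ⟨hx.1, m, hAS hmA, fun h => hx.2 (h ▸ hmA), mem_minOpen.1 hmx,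
    fun z hzS hzx hz_le => hm_max z ⟨mem_minOpen.2 hz_le, ?_⟩⟩
  by_contra hzA
  exact hzx (hx_min z ⟨hzS, hzA⟩ hz_le)

theorem isDbpRetract_of_hasSpecMax [T0Space X] {S A : Set X} (hAS : A ⊆ S)
    (hfin : (S \ A).Finite) (hA : ∀ x ∈ S \ A, HasSpecMax (minOpen x ∩ A)) :
    IsDbpRetract S A := by
  induction hn : (S \ A).ncard using Nat.strong_induction_on generalizing S with
  | _ n ih =>
    rcases (S \ A).eq_empty_or_nonempty with hSA | hne
    · rw [(sdiff_eq_empty.1 hSA).antisymm hAS]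
      exact .refl A
    obtain ⟨x, hx, hx_min⟩ := hfin.exists_specLE_minimal hne
    have hdiff : (S \ {x}) \ A = (S \ A) \ {x} := Set.sdiff_sdiff_comm
    refine .step x (isDownBeatPoint_of_minimal hAS hx hx_min (hA x hx)) ?_
    refine ih _ ?_ (fun a ha => ⟨hAS ha, fun hax => hx.2 (hax ▸ ha)⟩) ?_ (fun y hy => ?_) rfl
    · rw [← hn, hdiff]
      exact ncard_sdiff_singleton_lt_of_mem hx hfin
    · exact hdiff ▸ hfin.sdiff
    · exact hA y (sdiff_subset (hdiff ▸ hy))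

end DbpRetract

/-- Let `X` be a finite T₀-space and `A ⊆ X`. Then `A` is a dbp–retract
of `X` iff `U_x ∩ A` has a maximum (in the specialization order) for every `x ∈ X`;
equivalently, iff `U_x ∩ A` has a maximum for every `x ∈ X − A`. -/
theorem dbpRetract_iff_minOpen_inter_hasMax
    {X : Type u} [TopologicalSpace X] [Finite X] [T0Space X] (A : Set X) :
    (IsDbpRetract (Set.univ : Set X) A ↔
      ∀ x : X, ∃ m ∈ minOpen x ∩ A, ∀ z ∈ minOpen x ∩ A, specLE z m) ∧
    (IsDbpRetract (Set.univ : Set X) A ↔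
      ∀ x : X, x ∉ A → ∃ m ∈ minOpen x ∩ A, ∀ z ∈ minOpen x ∩ A, specLE z m) := by
  have fwd (h : IsDbpRetract univ A) (x : X) : HasSpecMax (minOpen x ∩ A) :=
    h.hasSpecMax_minOpen_inter (mem_univ x)
  have bwd (h : ∀ x, x ∉ A → HasSpecMax (minOpen x ∩ A)) : IsDbpRetract univ A :=
    isDbpRetract_of_hasSpecMax (subset_univ A) (toFinite _) fun x hx => h x hx.2
  exact ⟨⟨fwd, fun h => bwd fun x _ => h x⟩, ⟨fun h x _ => fwd h x, bwd⟩⟩
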